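/- There exists a group homomorphism ψ : G₂ → G₂ satisfying ψ(y₁) = y₁⁻¹, ψ(y₂) = y₂⁻¹, ψ(y₃) = y₃⁻¹, ψ(y₄) = y₄⁻¹, and ψ(v) = v·y₃⁻¹; that is, the substitution yᵢ ↦ yᵢ⁻¹ (i = 1, 2, 3, 4), v ↦ v·y₃⁻¹ preserves all four defining relations of G₂ and hence defines an endomorphism of G₂. -/

import Mathlib

/-! Conjugation by `v·y₃⁻¹` sends `yᵢ⁻¹` to `y₃·(v⁻¹·yᵢ·v)⁻¹·y₃⁻¹`. For each defining relation
`v⁻¹·yᵢ·v = wᵢ`, the word `wᵢ` with every `yⱼ` inverted is freely equal to `y₃·wᵢ⁻¹·y₃⁻¹`, so the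
substitution carries each relation of `G₂` to a consequence of that same relation. -/

/-- Relator words for the presentation of `G₂`: generators are indexed by `Fin 5`,
with `0,1,2,3` corresponding to `y₁,y₂,y₃,y₄` and `4` to `v`.  The relations are
`v⁻¹·yᵢ·v = wᵢ` written as relators `(v⁻¹·yᵢ·v)·wᵢ⁻¹`. -/
def G2rels : Set (FreeGroup (Fin 5)) :=
  {((FreeGroup.of 4)⁻¹ * FreeGroup.of 0 * FreeGroup.of 4) *
      (FreeGroup.of 0 * (FreeGroup.of 3)⁻¹ * FreeGroup.of 0 * FreeGroup.of 2)⁻¹,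
   ((FreeGroup.of 4)⁻¹ * FreeGroup.of 1 * FreeGroup.of 4) *
      ((FreeGroup.of 2)⁻¹ * FreeGroup.of 1 * FreeGroup.of 2 * FreeGroup.of 0 *
        FreeGroup.of 2 * FreeGroup.of 1)⁻¹,
   ((FreeGroup.of 4)⁻¹ * FreeGroup.of 2 * FreeGroup.of 4) *
      (FreeGroup.of 1 * FreeGroup.of 2)⁻¹,
   ((FreeGroup.of 4)⁻¹ * FreeGroup.of 3 * FreeGroup.of 4) *
      ((FreeGroup.of 2)⁻¹ * (FreeGroup.of 1)⁻¹ * (FreeGroup.of 1)⁻¹)⁻¹}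

/-- The group `G₂ = ⟨y₁,y₂,y₃,y₄,v ∣ v⁻¹·y₁·v = y₁·y₄⁻¹·y₁·y₃,
`v⁻¹·y₂·v = y₃⁻¹·y₂·y₃·y₁·y₃·y₂`, `v⁻¹·y₃·v = y₂·y₃`,
`v⁻¹·y₄·v = y₃⁻¹·y₂⁻¹·y₂⁻¹⟩`. -/
abbrev G₂ : Type := PresentedGroup G2rels

def y₁ : G₂ := PresentedGroup.of 0
def y₂ : G₂ := PresentedGroup.of 1
def y₃ : G₂ := PresentedGroup.of 2
def y₄ : G₂ := PresentedGroup.of 3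
def v : G₂ := PresentedGroup.of 4

lemma v_inv_mul_y₁_mul_v : v⁻¹ * y₁ * v = y₁ * y₄⁻¹ * y₁ * y₃ :=
  mul_inv_eq_one.mp (PresentedGroup.one_of_mem (by simp [G2rels]))

lemma v_inv_mul_y₂_mul_v : v⁻¹ * y₂ * v = y₃⁻¹ * y₂ * y₃ * y₁ * y₃ * y₂ :=
  mul_inv_eq_one.mp (PresentedGroup.one_of_mem (by simp [G2rels]))

lemma v_inv_mul_y₃_mul_v : v⁻¹ * y₃ * v = y₂ * y₃ :=
  mul_inv_eq_one.mp (PresentedGroup.one_of_mem (by simp [G2rels]))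

lemma v_inv_mul_y₄_mul_v : v⁻¹ * y₄ * v = y₃⁻¹ * y₂⁻¹ * y₂⁻¹ :=
  mul_inv_eq_one.mp (PresentedGroup.one_of_mem (by simp [G2rels]))

lemma mul_inv_conj_inv {G : Type*} [Group G] (a c g : G) :
    (a * c⁻¹)⁻¹ * g⁻¹ * (a * c⁻¹) = c * (a⁻¹ * g * a)⁻¹ * c⁻¹ := by
  group

def G2substitution : Fin 5 → G₂ := ![y₁⁻¹, y₂⁻¹, y₃⁻¹, y₄⁻¹, v * y₃⁻¹]

lemma lift_G2substitution_eq_one : ∀ r ∈ G2rels, FreeGroup.lift G2substitution r = 1 := by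
  rintro r (rfl | rfl | rfl | rfl) <;>
    simp only [map_mul, map_inv, FreeGroup.lift_apply_of, mul_inv_eq_one, G2substitution,
      Matrix.cons_val] <;>
    rw [mul_inv_conj_inv] <;>
    simp only [v_inv_mul_y₁_mul_v, v_inv_mul_y₂_mul_v, v_inv_mul_y₃_mul_v, v_inv_mul_y₄_mul_v] <;>
    simp [mul_assoc]

/-- There exists an endomorphism of `G₂` sending `yᵢ ↦ yᵢ⁻¹` and `v ↦ v·y₃⁻¹`. -/
theorem G2_exists_hom :
    ∃ ψ : G₂ →* G₂,
      ψ y₁ = y₁⁻¹ ∧ ψ y₂ = y₂⁻¹ ∧ ψ y₃ = y₃⁻¹ ∧ ψ y₄ = y₄⁻¹ ∧ ψ v = v * y₃⁻¹ :=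
  ⟨PresentedGroup.toGroup lift_G2substitution_eq_one, PresentedGroup.toGroup.of _,
    PresentedGroup.toGroup.of _, PresentedGroup.toGroup.of _, PresentedGroup.toGroup.of _,
    PresentedGroup.toGroup.of _⟩
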